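/- arXiv:2603.03093 — 7 statements merged into one kernel-verified Lean document; each statement's English description precedes it below -/
import Mathlib

section
/- Suppose (φ_n)_{n≥0} is a sequence of complex numbers, not identically zero, such that for all j < k one has Σ_{s=0}^{j} conj(φ_s)·φ_{k-j+s} = 0 (i.e., the monomials z^j are pairwise orthogonal in the induced inner product). Then there exists k₀ ∈ ℕ and c ∈ ℂ, c ≠ 0, such that φ_n = 0 for all n ≠ k₀ and φ_{k₀} = c; that is, φ is a monomial. -/
open Finset Complex

/-- If the monomials are pairwise orthogonal in the induced inner product, i.e.
`∑_{s=0}^{j} conj(φ_s) φ_{k-j+s} = 0` for all `j < k`, and `φ` is not identically zero,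
then `φ` is a monomial: there are `k₀` and `c ≠ 0` with `φ_{k₀} = c` and `φ_n = 0` for `n ≠ k₀`. -/
theorem stmt1 (φ : ℕ → ℂ) (hne : ∃ n, φ n ≠ 0)
    (horth : ∀ j k : ℕ, j < k →
      ∑ s ∈ Finset.range (j + 1), (starRingEnd ℂ) (φ s) * φ (k - j + s) = 0) :
    ∃ (k₀ : ℕ) (c : ℂ), c ≠ 0 ∧ φ k₀ = c ∧ ∀ n : ℕ, n ≠ k₀ → φ n = 0 := by
  classical
  set k₀ := Nat.find hne with hk₀def
  have hk₀ : φ k₀ ≠ 0 := Nat.find_spec hne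
  have hlt : ∀ m, m < k₀ → φ m = 0 := by
    intro m hm
    by_contra h
    exact absurd (Nat.find_le h) (not_le.mpr hm)
  refine ⟨k₀, φ k₀, hk₀, rfl, fun n hn => ?_⟩
  rcases lt_or_gt_of_ne hn with h | h
  · exact hlt n h
  · have key := horth k₀ n h
    rw [Finset.sum_range_succ] at key
    have hz : ∑ s ∈ Finset.range k₀, (starRingEnd ℂ) (φ s) * φ (n - k₀ + s) = 0 :=
      Finset.sum_eq_zero fun s hs => by
        rw [hlt s (Finset.mem_range.mp hs)]; simp
    rw [hz, zero_add, Nat.sub_add_cancel h.le] at key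
    rcases mul_eq_zero.mp key with h' | h'
    · exact absurd (by simpa using h') hk₀
    · exact h'
end

section
/- Let A, B ∈ ℂ and φ_0 = A + B, φ_n = B for n ≥ 1, with the induced inner product ⟨·,·⟩_b on polynomials (extended sesquilinearly from monomials). Define polynomials q_0 = 1 and q_n(z) = z^{n−1}(z−1) for n ≥ 1. Then the family {q_n}_{n≥0} is pairwise orthogonal with respect to ⟨·,·⟩_b if and only if conj(A)·B = −(1 + |A|²). -/
open Finset Polynomial Complex

noncomputable def dbInner (φ : ℕ → ℂ) (j k : ℕ) : ℂ :=
  (if j = k then 1 else 0) +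
    if j ≤ k then ∑ s ∈ Finset.range (j + 1), (starRingEnd ℂ) (φ s) * φ (k - j + s)
    else ∑ s ∈ Finset.range (k + 1), φ s * (starRingEnd ℂ) (φ (j - k + s))

noncomputable def polyInner (φ : ℕ → ℂ) (p q : Polynomial ℂ) : ℂ :=
  ∑ j ∈ p.support, ∑ k ∈ q.support, p.coeff j * (starRingEnd ℂ) (q.coeff k) * dbInner φ j k

open ComplexConjugate

/-! With `φ₀ = A + B` and `φₙ = B`, the Gram entries off the diagonal are
`⟨z^j, z^k⟩_b = conj (A + B) * B + j * |B|²` for `j < k`, and the diagonal ones exceed this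
affine expression by `δ = 1 + conj (A + B) * A`. The polynomials `q₀ = 1 = z⁰` and
`q_{n+1} = z^{n+1} - z^n` are first differences of monomials, so the affine part cancels in
`⟨q_m, q_n⟩_b` for `m < n`, and only the diagonal excess survives: the product is `-δ` when
`n = m + 1` and `0` otherwise. Orthogonality is therefore `δ = 0`, whose conjugate reads
`conj A * B = -(1 + |A|²)`. -/

section Sesquilinear

variable (φ : ℕ → ℂ)

lemma dbInner_swap (j k : ℕ) : dbInner φ k j = conj (dbInner φ j k) := by
  unfold dbInner
  rcases lt_trichotomy j k with h | rfl | h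
  · simp [h.ne', h.ne, h.le, not_le.mpr h]
  · simp [mul_comm]
  · simp [h.ne', h.ne, h.le, not_le.mpr h]

lemma polyInner_eq_sum_of_support_subset {p q : ℂ[X]} {S T : Finset ℕ}
    (hS : p.support ⊆ S) (hT : q.support ⊆ T) :
    polyInner φ p q = ∑ j ∈ S, ∑ k ∈ T, p.coeff j * conj (q.coeff k) * dbInner φ j k := by
  unfold polyInner
  refine Finset.sum_subset_zero_on_sdiff hS (fun j hj => ?_) fun j _ => ?_
  · simp [notMem_support_iff.mp (Finset.mem_sdiff.mp hj).2]
  · exact Finset.sum_subset hT fun k _ hk => by simp [notMem_support_iff.mp hk]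

lemma polyInner_swap (p q : ℂ[X]) : polyInner φ p q = conj (polyInner φ q p) := by
  unfold polyInner
  rw [map_sum, Finset.sum_comm]
  refine Finset.sum_congr rfl fun j _ => ?_
  rw [map_sum]
  refine Finset.sum_congr rfl fun k _ => ?_
  rw [map_mul, map_mul, conj_conj, ← dbInner_swap]
  ring

lemma polyInner_sub_left (p p' q : ℂ[X]) :
    polyInner φ (p - p') q = polyInner φ p q - polyInner φ p' q := by
  have hsub : (p - p').support ⊆ p.support ∪ p'.support := by
    rw [sub_eq_add_neg]
    exact support_add.trans (by rw [support_neg])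
  rw [polyInner_eq_sum_of_support_subset φ hsub subset_rfl,
    polyInner_eq_sum_of_support_subset φ Finset.subset_union_left subset_rfl,
    polyInner_eq_sum_of_support_subset φ Finset.subset_union_right subset_rfl,
    ← Finset.sum_sub_distrib]
  refine Finset.sum_congr rfl fun j _ => ?_
  rw [← Finset.sum_sub_distrib]
  refine Finset.sum_congr rfl fun k _ => ?_
  rw [coeff_sub]
  ring

lemma polyInner_sub_right (p q q' : ℂ[X]) :
    polyInner φ p (q - q') = polyInner φ p q - polyInner φ p q' := by
  rw [polyInner_swap, polyInner_sub_left, map_sub, ← polyInner_swap, ← polyInner_swap]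

lemma polyInner_X_pow_X_pow (j k : ℕ) :
    polyInner φ (X ^ j) (X ^ k) = dbInner φ j k := by
  simp [polyInner, support_X_pow]

end Sesquilinear

def stepSeq (A B : ℂ) : ℕ → ℂ := fun n => if n = 0 then A + B else B

noncomputable def diffPoly (n : ℕ) : ℂ[X] := if n = 0 then 1 else X ^ (n - 1) * (X - 1)

lemma diffPoly_zero : diffPoly 0 = X ^ 0 := by simp [diffPoly]

lemma diffPoly_succ (n : ℕ) : diffPoly (n + 1) = X ^ (n + 1) - X ^ n := by
  simp only [diffPoly, Nat.add_one_ne_zero, if_false, Nat.add_sub_cancel]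
  ring

section StepSeq

variable (A B : ℂ)

lemma dbInner_stepSeq_of_le {j k : ℕ} (h : j ≤ k) :
    dbInner (stepSeq A B) j k = (if j = k then 1 + conj (A + B) * A else 0)
      + (conj (A + B) * B + j * (conj B * B)) := by
  have hφ : ∀ s, stepSeq A B (s + 1) = B := fun s => if_neg s.succ_ne_zero
  have hφ₀ : stepSeq A B (k - j) = if j = k then A + B else B := by
    simp only [stepSeq, show k - j = 0 ↔ j = k by omega]
  simp only [dbInner, if_pos h, Finset.sum_range_succ', add_zero, ← add_assoc, hφ, hφ₀]
  simp only [Finset.sum_const, Finset.card_range, nsmul_eq_mul, stepSeq]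
  split_ifs <;> ring

lemma polyInner_stepSeq_diffPoly_of_lt {m n : ℕ} (h : m < n) :
    polyInner (stepSeq A B) (diffPoly m) (diffPoly n)
      = if n = m + 1 then -(1 + conj (A + B) * A) else 0 := by
  obtain ⟨b, rfl⟩ : ∃ b, n = b + 1 := Nat.exists_eq_succ_of_ne_zero (by omega)
  rcases m with _ | a
  · rw [diffPoly_zero, diffPoly_succ, polyInner_sub_right, polyInner_X_pow_X_pow,
      polyInner_X_pow_X_pow, dbInner_stepSeq_of_le _ _ (by omega),
      dbInner_stepSeq_of_le _ _ (by omega)]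
    rcases b with _ | b <;> simp
  · simp only [diffPoly_succ, polyInner_sub_left, polyInner_sub_right, polyInner_X_pow_X_pow]
    rw [dbInner_stepSeq_of_le _ _ (by omega), dbInner_stepSeq_of_le _ _ (by omega),
      dbInner_stepSeq_of_le _ _ (by omega), dbInner_stepSeq_of_le _ _ (by omega)]
    by_cases hb : b = a + 1
    · subst hb
      simp only [show a ≠ a + 2 by omega, show a + 1 ≠ a + 2 by omega,
        show a ≠ a + 1 by omega, if_false]
      push_cast
      ring
    · simp only [show a + 1 ≠ b + 1 by omega, show a + 1 ≠ b by omega,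
        show a ≠ b + 1 by omega, show a ≠ b by omega, show b + 1 ≠ a + 1 + 1 by omega,
        if_false]
      push_cast
      ring

theorem diffPoly_pairwise_orthogonal_iff :
    (∀ m n : ℕ, m ≠ n → polyInner (stepSeq A B) (diffPoly m) (diffPoly n) = 0)
      ↔ 1 + conj (A + B) * A = 0 := by
  constructor
  · intro h
    have h01 := h 0 1 zero_ne_one
    rwa [polyInner_stepSeq_diffPoly_of_lt A B zero_lt_one, if_pos (zero_add 1).symm,
      neg_eq_zero] at h01
  · intro hδ m n hmn
    have of_lt : ∀ {m n}, m < n → polyInner (stepSeq A B) (diffPoly m) (diffPoly n) = 0 :=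
      fun h => by rw [polyInner_stepSeq_diffPoly_of_lt A B h, hδ, neg_zero, ite_self]
    rcases hmn.lt_or_gt with h | h
    · exact of_lt h
    · rw [polyInner_swap, of_lt h, map_zero]

end StepSeq

/-- For φ_0 = A+B, φ_n = B (n ≥ 1), the family q_0 = 1, q_n = z^{n-1}(z-1) is pairwise
orthogonal in ⟨·,·⟩_b if and only if conj(A)·B = -(1+|A|²). -/
theorem stmt3 (A B : ℂ) :
    (∀ m n : ℕ, m ≠ n →
        polyInner (fun n => if n = 0 then A + B else B)
          (if m = 0 then 1 else X ^ (m - 1) * (X - 1))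
          (if n = 0 then 1 else X ^ (n - 1) * (X - 1)) = 0)
      ↔ (starRingEnd ℂ) A * B = -(1 + ((‖A‖ : ℝ) : ℂ) ^ 2) := by
  refine (diffPoly_pairwise_orthogonal_iff A B).trans ?_
  rw [← map_eq_zero (starRingEnd ℂ), ← conj_mul']
  simp only [map_add, map_one, map_mul, conj_conj]
  constructor <;> intro h <;> linear_combination h
end

section
/- Let φ_0 = 1 (coming from φ(z) = (1+z)/(1−z), i.e. φ_0 = 1, φ_n = 2 for n ≥ 1). With the induced inner product ⟨·,·⟩_b on polynomials, the polynomials p_0 = 1/√2 and p_n(z) = z^{n−1}(z−1)/2 for n ≥ 1 form an orthonormal family: ⟨p_m, p_n⟩_b = δ_{m,n} for all m, n ≥ 0. -/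
open Finset Polynomial Complex

private noncomputable def φ₀ : ℕ → ℂ := fun n => if n = 0 then 1 else 2

private lemma conj_phi (s : ℕ) : (starRingEnd ℂ) (φ₀ s) = φ₀ s := by
  unfold φ₀; split
  · simp
  · simp [map_ofNat]

private lemma sum_phi (j m : ℕ) :
    ∑ s ∈ Finset.range (j + 1), φ₀ s * φ₀ (m + s) = φ₀ m + 4 * (j : ℂ) := by
  induction j with
  | zero => simp [φ₀]
  | succ j ih =>
    rw [Finset.sum_range_succ, ih]
    have h1 : φ₀ (j + 1) = 2 := if_neg (Nat.succ_ne_zero j)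
    have h2 : φ₀ (m + (j + 1)) = 2 := if_neg (by omega)
    rw [h1, h2]; push_cast; ring

private lemma dbInner_eq (j k : ℕ) : dbInner φ₀ j k = 2 + 4 * ((min j k : ℕ) : ℂ) := by
  unfold dbInner
  rcases le_or_gt j k with h | h
  · rw [if_pos h]
    have hc : ∀ s ∈ Finset.range (j + 1),
        (starRingEnd ℂ) (φ₀ s) * φ₀ (k - j + s) = φ₀ s * φ₀ ((k - j) + s) :=
      fun s _ => by rw [conj_phi]
    rw [Finset.sum_congr rfl hc, sum_phi, Nat.min_eq_left h]
    rcases eq_or_lt_of_le h with rfl | hlt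
    · simp [φ₀, Nat.sub_self]; ring
    · rw [if_neg (Nat.ne_of_lt hlt)]
      have h2 : φ₀ (k - j) = 2 := if_neg (by omega)
      rw [h2]; ring
  · rw [if_neg (by omega), if_neg (by omega)]
    have hc : ∀ s ∈ Finset.range (k + 1),
        φ₀ s * (starRingEnd ℂ) (φ₀ (j - k + s)) = φ₀ s * φ₀ ((j - k) + s) :=
      fun s _ => by rw [conj_phi]
    rw [Finset.sum_congr rfl hc, sum_phi, Nat.min_eq_right (le_of_lt h)]
    have h2 : φ₀ (j - k) = 2 := if_neg (by omega)
    rw [h2]; ring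

private lemma polyInner_eq_sum (φ : ℕ → ℂ) (p q : Polynomial ℂ) (S T : Finset ℕ)
    (hS : p.support ⊆ S) (hT : q.support ⊆ T) :
    polyInner φ p q
      = ∑ j ∈ S, ∑ k ∈ T, p.coeff j * (starRingEnd ℂ) (q.coeff k) * dbInner φ j k := by
  unfold polyInner
  rw [Finset.sum_subset hS]
  · refine Finset.sum_congr rfl fun j _ => ?_
    rw [Finset.sum_subset hT]
    intro k _ hk
    rw [Polynomial.notMem_support_iff.mp hk]; simp
  · intro j _ hj
    rw [Polynomial.notMem_support_iff.mp hj]; simp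

private lemma coeff_p (a j : ℕ) :
    (Polynomial.C (1 / 2 : ℂ) * (X ^ a * (X - 1))).coeff j =
      (1 / 2) * (if j = a + 1 then 1 else 0) - (1 / 2) * (if j = a then 1 else 0) := by
  have h : (X : ℂ[X]) ^ a * (X - 1) = X ^ (a + 1) - X ^ a := by ring
  rw [h, mul_sub, Polynomial.coeff_sub, Polynomial.coeff_C_mul, Polynomial.coeff_C_mul,
      Polynomial.coeff_X_pow, Polynomial.coeff_X_pow]

private lemma supp_p (a : ℕ) :
    (Polynomial.C (1 / 2 : ℂ) * (X ^ a * (X - 1))).support ⊆ {a, a + 1} := by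
  intro j hj
  rw [Polynomial.mem_support_iff, coeff_p] at hj
  simp only [Finset.mem_insert, Finset.mem_singleton]
  by_contra h
  push_neg at h
  rw [if_neg h.2, if_neg h.1] at hj
  simp at hj

private lemma supp_c : (Polynomial.C ((Real.sqrt 2 : ℂ)⁻¹)).support ⊆ {0} := by
  intro j hj
  rw [Polynomial.mem_support_iff, Polynomial.coeff_C] at hj
  simp only [Finset.mem_singleton]
  by_contra h
  rw [if_neg h] at hj
  exact hj rfl

private lemma sqrt2_mul : ((Real.sqrt 2 : ℂ))⁻¹ * ((Real.sqrt 2 : ℂ))⁻¹ * 2 = 1 := by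
  have h : (Real.sqrt 2) * (Real.sqrt 2) = 2 := Real.mul_self_sqrt (by norm_num)
  have h2 : ((Real.sqrt 2 : ℝ) : ℂ) * ((Real.sqrt 2 : ℝ) : ℂ) = 2 := by exact_mod_cast h
  rw [← mul_inv, h2]
  norm_num

/-- For φ(z) = (1+z)/(1-z) (φ_0 = 1, φ_n = 2 for n ≥ 1), the polynomials
p_0 = 1/√2, p_n = z^{n-1}(z-1)/2 form an orthonormal family in ⟨·,·⟩_b. -/
theorem stmt6 :
    ∀ m n : ℕ,
      polyInner (fun n => if n = 0 then 1 else 2)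
        (if m = 0 then Polynomial.C ((Real.sqrt 2 : ℂ)⁻¹) else
          Polynomial.C (1 / 2 : ℂ) * (X ^ (m - 1) * (X - 1)))
        (if n = 0 then Polynomial.C ((Real.sqrt 2 : ℂ)⁻¹) else
          Polynomial.C (1 / 2 : ℂ) * (X ^ (n - 1) * (X - 1)))
      = if m = n then 1 else 0 := by
  intro m n
  have hφ : (fun n => if n = 0 then (1 : ℂ) else 2) = φ₀ := rfl
  rw [hφ]
  rcases Nat.eq_zero_or_pos m with hm | hm
  · subst hm
    rcases Nat.eq_zero_or_pos n with hn | hn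
    · subst hn
      rw [if_pos rfl,
        polyInner_eq_sum φ₀ _ _ {0} {0} supp_c supp_c]
      simp only [Finset.sum_singleton, Polynomial.coeff_C_zero, dbInner_eq]
      rw [map_inv₀, Complex.conj_ofReal]
      simpa using sqrt2_mul
    · obtain ⟨b, rfl⟩ : ∃ b, n = b + 1 := ⟨n - 1, by omega⟩
      rw [if_pos rfl, if_neg (Nat.succ_ne_zero b), if_neg (Nat.succ_ne_zero b).symm,
        polyInner_eq_sum φ₀ _ _ {0} {b, b + 1} supp_c (by simpa using supp_p b)]
      simp only [Finset.sum_singleton, Finset.sum_pair (by omega : b ≠ b + 1)]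
      rw [Polynomial.coeff_C_zero]
      simp only [Nat.add_sub_cancel, coeff_p, dbInner_eq]
      have e1 : min 0 b = 0 := by omega
      have e2 : min 0 (b + 1) = 0 := by omega
      have h1 : b ≠ b + 1 := by omega
      have h2 : b + 1 ≠ b := by omega
      simp only [e1, e2, if_pos rfl, if_neg h1, if_neg h2, map_div₀, map_neg, map_one,
        map_ofNat, map_sub, map_mul, map_zero]
      push_cast
      ring
  · obtain ⟨a, rfl⟩ : ∃ a, m = a + 1 := ⟨m - 1, by omega⟩
    rcases Nat.eq_zero_or_pos n with hn | hn
    · subst hn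
      rw [if_neg (Nat.succ_ne_zero a), if_pos rfl, if_neg (Nat.succ_ne_zero a),
        polyInner_eq_sum φ₀ _ _ {a, a + 1} {0} (by simpa using supp_p a) supp_c]
      simp only [Finset.sum_singleton, Finset.sum_pair (by omega : a ≠ a + 1)]
      rw [Polynomial.coeff_C_zero]
      simp only [Nat.add_sub_cancel, coeff_p, dbInner_eq]
      have e1 : min a 0 = 0 := by omega
      have e2 : min (a + 1) 0 = 0 := by omega
      have h1 : a ≠ a + 1 := by omega
      have h2 : a + 1 ≠ a := by omega
      simp only [e1, e2, if_pos rfl, if_neg h1, if_neg h2, map_div₀, map_neg, map_one,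
        map_ofNat, map_sub, map_mul, map_zero]
      push_cast
      ring
    · obtain ⟨b, rfl⟩ : ∃ b, n = b + 1 := ⟨n - 1, by omega⟩
      rw [if_neg (Nat.succ_ne_zero a), if_neg (Nat.succ_ne_zero b),
        polyInner_eq_sum φ₀ _ _ {a, a + 1} {b, b + 1}
          (by simpa using supp_p a) (by simpa using supp_p b)]
      simp only [Finset.sum_pair (by omega : a ≠ a + 1), Finset.sum_pair (by omega : b ≠ b + 1)]
      simp only [Nat.add_sub_cancel, coeff_p, dbInner_eq, map_sub, map_mul, map_one, map_div₀,
        map_ofNat, Complex.conj_ofReal]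
      have ha1 : a ≠ a + 1 := by omega
      have ha2 : a + 1 ≠ a := by omega
      have hb1 : b ≠ b + 1 := by omega
      have hb2 : b + 1 ≠ b := by omega
      rcases lt_trichotomy a b with h | rfl | h
      · have e1 : min a b = a := by omega
        have e2 : min a (b + 1) = a := by omega
        have e3 : min (a + 1) b = a + 1 := by omega
        have e4 : min (a + 1) (b + 1) = a + 1 := by omega
        have h5 : a + 1 ≠ b + 1 := by omega
        simp only [e1, e2, e3, e4, if_pos rfl, if_neg ha1, if_neg ha2, if_neg hb1, if_neg hb2,
          if_neg h5]
        push_cast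
        ring
      · have e1 : min a (a + 1) = a := by omega
        have e2 : min (a + 1) a = a := by omega
        simp only [e1, e2, Nat.min_self, if_pos rfl, if_neg ha1, if_neg ha2, map_zero, map_one, map_div₀, map_ofNat, map_sub, map_mul]
        push_cast
        ring_nf
        simp
      · have e1 : min a b = b := by omega
        have e2 : min a (b + 1) = b + 1 := by omega
        have e3 : min (a + 1) b = b := by omega
        have e4 : min (a + 1) (b + 1) = b + 1 := by omega
        have h5 : a + 1 ≠ b + 1 := by omega
        simp only [e1, e2, e3, e4, if_pos rfl, if_neg ha1, if_neg ha2, if_neg hb1, if_neg hb2,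
          if_neg h5]
        push_cast
        ring
end

section
/- Let (φ_n) be a sequence of complex numbers and N ≥ 1 an integer. Define φ̃_k = φ_{k/N} if N divides k and φ̃_k = 0 otherwise. Then for all natural numbers j ≤ k and 0 ≤ i < N: ⟨z^{Nj+i}, z^{Nk+i}⟩_{b̃} = ⟨z^j, z^k⟩_b, where each side uses the inner product induced by (φ̃_n) and (φ_n) respectively. Moreover ⟨z^{j'}, z^{k'}⟩_{b̃} = 0 whenever j' ≢ k' (mod N). -/
open Finset Polynomial Complex

/-- For the composed symbol φ(z^N) with coefficients φ̃_k = φ_{k/N} if N ∣ k, else 0: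
⟨z^{Nj+i}, z^{Nk+i}⟩_{b̃} = ⟨z^j, z^k⟩_b for j ≤ k, 0 ≤ i < N, and
⟨z^{j'}, z^{k'}⟩_{b̃} = 0 whenever j' ≢ k' (mod N). -/
theorem stmt7 (φ : ℕ → ℂ) (N : ℕ) (hN : 1 ≤ N) :
    (∀ j k i : ℕ, j ≤ k → i < N →
        dbInner (fun m => if N ∣ m then φ (m / N) else 0) (N * j + i) (N * k + i)
          = dbInner φ j k) ∧
    (∀ j' k' : ℕ, j' % N ≠ k' % N →
        dbInner (fun m => if N ∣ m then φ (m / N) else 0) j' k' = 0) := by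
  have hNpos : 0 < N := hN
  set φ' : ℕ → ℂ := fun m => if N ∣ m then φ (m / N) else 0 with hφ'
  constructor
  · intro j k i hjk hi
    have hmul : N * j ≤ N * k := Nat.mul_le_mul_left N hjk
    have hle : N * j + i ≤ N * k + i := by omega
    have heq : (N * j + i = N * k + i) ↔ (j = k) := by
      constructor
      · intro h; exact Nat.eq_of_mul_eq_mul_left hNpos (by omega)
      · intro h; rw [h]
    unfold dbInner
    rw [if_pos hle, if_pos hjk]
    congr 1
    · simp only [heq]
    · have hsub : N * k + i - (N * j + i) = N * (k - j) := by
        rw [Nat.mul_sub]; omega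
      have hfil : (Finset.range (N * j + i + 1)).filter (fun s => N ∣ s)
          = (Finset.range (j + 1)).image (fun t => N * t) := by
        ext m
        simp only [mem_filter, mem_range, mem_image]
        constructor
        · rintro ⟨hm, c, rfl⟩
          refine ⟨c, ?_, rfl⟩
          have : N * c < N * (j + 1) := by
            have : N * c < N * j + i + 1 := hm
            calc N * c < N * j + i + 1 := hm
              _ ≤ N * j + N := by omega
              _ = N * (j + 1) := by ring
          exact Nat.lt_of_mul_lt_mul_left this
        · rintro ⟨t, ht, rfl⟩
          have : N * t ≤ N * j := Nat.mul_le_mul_left N (by omega)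
          exact ⟨by omega, ⟨t, rfl⟩⟩
      rw [← Finset.sum_filter_add_sum_filter_not (Finset.range (N * j + i + 1))
        (fun s => N ∣ s)]
      have h0 : ∑ s ∈ (Finset.range (N * j + i + 1)).filter (fun s => ¬ N ∣ s),
          (starRingEnd ℂ) (φ' s) * φ' (N * k + i - (N * j + i) + s) = 0 := by
        apply Finset.sum_eq_zero
        intro s hs
        simp only [mem_filter] at hs
        simp [hφ', hs.2]
      rw [h0, add_zero, hfil,
        Finset.sum_image (fun a _ b _ h => Nat.eq_of_mul_eq_mul_left hNpos h)]
      apply Finset.sum_congr rfl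
      intro t _
      have h1 : φ' (N * t) = φ t := by
        simp [hφ', Nat.mul_div_cancel_left _ hNpos]
      have h2 : φ' (N * k + i - (N * j + i) + N * t) = φ (k - j + t) := by
        have hr : N * k + i - (N * j + i) + N * t = N * (k - j + t) := by
          rw [hsub, Nat.mul_add]
        rw [hr]
        simp [hφ', Nat.mul_div_cancel_left _ hNpos]
      rw [h1, h2]
  · intro j' k' h
    have hne : j' ≠ k' := fun e => h (by rw [e])
    have key : ∀ a b : ℕ, a ≤ b → a % N ≠ b % N → ¬ N ∣ (b - a) := by
      intro a b hab hmod hd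
      obtain ⟨c, hc⟩ := hd
      have hb : b = a + N * c := by omega
      apply hmod
      rw [hb, Nat.add_mul_mod_self_left]
    unfold dbInner
    rw [if_neg hne]
    by_cases hjk : j' ≤ k'
    · rw [if_pos hjk]
      rw [zero_add]
      apply Finset.sum_eq_zero
      intro s _
      by_cases hs : N ∣ s
      · have hnd : ¬ N ∣ (k' - j' + s) := by
          intro hd
          have := Nat.dvd_sub hd hs
          rw [Nat.add_sub_cancel] at this
          exact key j' k' hjk h this
        simp [hφ', hnd]
      · simp [hφ', hs]
    · rw [if_neg hjk]
      rw [zero_add]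
      apply Finset.sum_eq_zero
      intro s _
      by_cases hs : N ∣ s
      · have hnd : ¬ N ∣ (j' - k' + s) := by
          intro hd
          have := Nat.dvd_sub hd hs
          rw [Nat.add_sub_cancel] at this
          exact key k' j' (by omega) (Ne.symm h) this
        simp [hφ', hnd]
      · simp [hφ', hs]
end

section
/- Fix N ≥ 1 and let φ̃ be the coefficient sequence of φ(z^N) where φ(z) = (1+z)/(1−z), i.e. φ̃_0 = 1, φ̃_{Nk} = 2 for k ≥ 1, and φ̃_m = 0 if N does not divide m. Then the polynomials p_j(z) = z^j/√2 for 0 ≤ j < N, and p_{Nk+i}(z) = z^{N(k−1)+i}(z^N − 1)/2 for k ≥ 1, 0 ≤ i < N, form an orthonormal family with respect to the induced inner product. -/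
open Finset Polynomial Complex

noncomputable def phiN (N : ℕ) : ℕ → ℂ :=
  fun k => if N ∣ k then (if k / N = 0 then 1 else 2) else 0

lemma phiN_conj (N k : ℕ) : (starRingEnd ℂ) (phiN N k) = phiN N k := by
  unfold phiN; split_ifs <;> simp [Complex.conj_ofNat]

lemma phiN_zero (N : ℕ) : phiN N 0 = 1 := by simp [phiN]

lemma phiN_of_not_dvd (N k : ℕ) (h : ¬ N ∣ k) : phiN N k = 0 := by simp [phiN, h]

lemma phiN_of_dvd_pos (N k : ℕ) (hN : 1 ≤ N) (h : N ∣ k) (hk : k ≠ 0) : phiN N k = 2 := by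
  have h1 : N ≤ k := Nat.le_of_dvd (Nat.pos_of_ne_zero hk) h
  have h2 : k / N ≠ 0 := by
    have := Nat.one_le_div_iff (by omega : 0 < N) |>.mpr h1
    omega
  simp [phiN, h, h2]

lemma sum_phiN (N j d : ℕ) (hN : 1 ≤ N) :
    ∑ s ∈ Finset.range (j + 1), phiN N s * phiN N (d + s) =
      if N ∣ d then (if d = 0 then 1 else 2) + 4 * ((j / N : ℕ) : ℂ) else 0 := by
  by_cases hd : N ∣ d
  · rw [if_pos hd]
    have hfil : (Finset.range (j + 1)).filter (fun s => N ∣ s)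
        = (Finset.range (j / N + 1)).image (fun t => N * t) := by
      ext s
      simp only [Finset.mem_filter, Finset.mem_range, Finset.mem_image, Nat.lt_succ_iff]
      constructor
      · rintro ⟨hs, t, rfl⟩
        exact ⟨t, by
          have ht : t * N ≤ j := by rw [mul_comm]; omega
          exact (Nat.le_div_iff_mul_le (by omega)).mpr ht, by ring⟩
      · rintro ⟨t, ht, rfl⟩
        have h2 : t * N ≤ j := (Nat.le_div_iff_mul_le (by omega)).mp ht
        exact ⟨by rw [mul_comm]; omega, ⟨t, rfl⟩⟩
    have key : ∑ s ∈ Finset.range (j + 1), phiN N s * phiN N (d + s)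
        = ∑ t ∈ Finset.range (j / N + 1), phiN N (N * t) * phiN N (d + N * t) := by
      rw [← Finset.sum_filter_of_ne (p := fun s => N ∣ s), hfil,
          Finset.sum_image (fun a _ b _ h => Nat.eq_of_mul_eq_mul_left (by omega) h)]
      intro x _ hx
      by_contra hnd
      exact hx (by rw [phiN_of_not_dvd N x hnd, zero_mul])
    rw [key, Finset.sum_range_succ']
    have hterm : ∀ t, phiN N (N * (t + 1)) * phiN N (d + N * (t + 1)) = 4 := by
      intro t
      rw [phiN_of_dvd_pos N _ hN ⟨t + 1, rfl⟩ (by positivity),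
          phiN_of_dvd_pos N _ hN (by exact Dvd.dvd.add hd ⟨t + 1, rfl⟩) (by positivity)]
      norm_num
    simp only [hterm, Finset.sum_const, Finset.card_range, nsmul_eq_mul, mul_zero, add_zero,
      phiN_zero, one_mul]
    rcases eq_or_ne d 0 with rfl | hd0
    · rw [if_pos rfl, phiN_zero]; ring
    · rw [if_neg hd0, phiN_of_dvd_pos N d hN hd hd0]; ring
  · rw [if_neg hd]
    apply Finset.sum_eq_zero
    intro s _
    by_cases hs : N ∣ s
    · have : ¬ N ∣ (d + s) := fun h => hd (by
        have := (Nat.dvd_add_right hs).mp (by rwa [add_comm] at h); exact this)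
      rw [phiN_of_not_dvd N _ this, mul_zero]
    · rw [phiN_of_not_dvd N _ hs, zero_mul]

lemma dbInner_eq_s9 (N j k : ℕ) (hN : 1 ≤ N) :
    dbInner (phiN N) j k
      = if j % N = k % N then 2 + 4 * ((min j k / N : ℕ) : ℂ) else 0 := by
  have main : ∀ a b : ℕ, a ≤ b →
      (if a = b then (1 : ℂ) else 0) + ∑ s ∈ Finset.range (a + 1), phiN N s * phiN N (b - a + s)
        = if a % N = b % N then 2 + 4 * ((a / N : ℕ) : ℂ) else 0 := by
    intro a b hab
    rw [sum_phiN N a (b - a) hN]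
    rcases eq_or_lt_of_le hab with rfl | hlt
    · simp [Nat.sub_self]
      ring
    · rw [if_neg (Nat.ne_of_lt hlt), if_neg (by omega : ¬ b - a = 0)]
      by_cases hdvd : N ∣ (b - a)
      · rw [if_pos hdvd, if_pos (show a % N = b % N from (Nat.modEq_iff_dvd' hab).mpr hdvd)]
        ring
      · rw [if_neg hdvd, if_neg (show ¬ a % N = b % N from fun h => hdvd ((Nat.modEq_iff_dvd' hab).mp h))]
        ring
  rcases le_or_gt j k with h | h
  · rw [min_eq_left h]
    unfold dbInner
    rw [if_pos h]
    simp only [phiN_conj]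
    exact main j k h
  · rw [min_eq_right h.le]
    unfold dbInner
    rw [if_neg (show ¬ j = k from by omega), if_neg (show ¬ j ≤ k from by omega)]
    simp only [phiN_conj]
    have := main k j h.le
    rw [if_neg (show ¬ k = j from by omega)] at this
    rw [this]
    by_cases hc : k % N = j % N
    · rw [if_pos hc, if_pos hc.symm]
    · rw [if_neg hc, if_neg (fun h' => hc h'.symm)]

lemma coeff_bl (c d : ℂ) {u v : ℕ} (h : u ≠ v) : (C c * X ^ u + C d * X ^ v).coeff u = c := by
  rw [coeff_add, coeff_C_mul, coeff_C_mul, coeff_X_pow, coeff_X_pow, if_pos rfl,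
    if_neg h, mul_one, mul_zero, add_zero]

lemma coeff_br (c d : ℂ) {u v : ℕ} (h : u ≠ v) : (C c * X ^ u + C d * X ^ v).coeff v = d := by
  rw [coeff_add, coeff_C_mul, coeff_C_mul, coeff_X_pow, coeff_X_pow, if_pos rfl,
    if_neg (Ne.symm h), mul_one, mul_zero, zero_add]

lemma big_eq (N m : ℕ) (hN : 1 ≤ N) (hm : N ≤ m) :
    C (1/2 : ℂ) * (X ^ (N * (m / N - 1) + m % N) * (X ^ N - 1))
      = C (1/2 : ℂ) * X ^ ((m - N) + N) + C (-(1/2) : ℂ) * X ^ (m - N) := by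
  have h1 : 1 ≤ m / N := (Nat.one_le_div_iff (by omega)).mpr hm
  obtain ⟨q, hq⟩ := Nat.exists_eq_add_of_le h1
  have h2 := Nat.div_add_mod m N
  have hidx : N * (m / N - 1) + m % N = m - N := by
    rw [hq] at h2 ⊢
    rw [show 1 + q - 1 = q from by omega]
    rw [Nat.mul_add, mul_one] at h2
    omega
  rw [hidx, map_neg]
  ring

/-- For b(z) = (1+z^N)/2, with φ̃ the coefficients of (1+z^N)/(1-z^N), the polynomials
p_j = z^j/√2 (j < N) and p_{Nk+i} = z^{N(k-1)+i}(z^N-1)/2 (k ≥ 1, 0 ≤ i < N) form an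
orthonormal family. -/
theorem stmt9 (N : ℕ) (hN : 1 ≤ N) :
    ∀ m n : ℕ,
      polyInner
        (fun k => if N ∣ k then (if k / N = 0 then 1 else 2) else 0)
        (if m < N then Polynomial.C ((Real.sqrt 2 : ℂ)⁻¹) * X ^ m
          else Polynomial.C (1 / 2 : ℂ) * (X ^ (N * (m / N - 1) + m % N) * (X ^ N - 1)))
        (if n < N then Polynomial.C ((Real.sqrt 2 : ℂ)⁻¹) * X ^ n
          else Polynomial.C (1 / 2 : ℂ) * (X ^ (N * (n / N - 1) + n % N) * (X ^ N - 1)))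
      = if m = n then 1 else 0 := by
  intro m n
  have hphi : (fun k => if N ∣ k then (if k / N = 0 then (1:ℂ) else 2) else 0) = phiN N := rfl
  rw [hphi]
  have hN0 : 0 < N := hN
  have hs2 : (0:ℝ) < Real.sqrt 2 := Real.sqrt_pos.mpr (by norm_num)
  have hc : ((Real.sqrt 2 : ℂ))⁻¹ ≠ 0 := inv_ne_zero (by exact_mod_cast hs2.ne')
  have hcc : ((Real.sqrt 2 : ℂ))⁻¹ * ((Real.sqrt 2 : ℂ))⁻¹ = 1/2 := by
    rw [← mul_inv, ← Complex.ofReal_mul, Real.mul_self_sqrt (by norm_num)]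
    norm_num
  have hhalf : (1/2 : ℂ) ≠ 0 := by norm_num
  have hneg : (-(1/2) : ℂ) ≠ 0 := by norm_num
  have hcn : (starRingEnd ℂ) ((Real.sqrt 2 : ℂ))⁻¹ = ((Real.sqrt 2 : ℂ))⁻¹ := by
    rw [map_inv₀, Complex.conj_ofReal]
  have hch : (starRingEnd ℂ) (1/2 : ℂ) = 1/2 := by
    rw [map_div₀, map_one, Complex.conj_ofNat]
  have hchn : (starRingEnd ℂ) (-(1/2) : ℂ) = -(1/2) := by
    rw [map_neg, map_div₀, map_one, Complex.conj_ofNat]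
  have hdb : ∀ j k : ℕ, dbInner (phiN N) j k
      = if j % N = k % N then 2 + 4 * ((min j k / N : ℕ) : ℂ) else 0 :=
    fun j k => dbInner_eq_s9 N j k hN
  by_cases hm : m < N <;> by_cases hn : n < N
  · -- both small
    rw [if_pos hm, if_pos hn]
    unfold polyInner
    rw [support_C_mul_X_pow m hc, support_C_mul_X_pow n hc,
      Finset.sum_singleton, Finset.sum_singleton]
    simp only [coeff_C_mul, coeff_X_pow_self, mul_one]
    rw [hdb, hcn, Nat.mod_eq_of_lt hm, Nat.mod_eq_of_lt hn,
      Nat.div_eq_of_lt (show min m n < N from by omega)]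
    by_cases hmn : m = n
    · rw [if_pos hmn, if_pos hmn, hcc]
      norm_num
    · rw [if_neg hmn, if_neg hmn, mul_zero]
  · -- m small, n big
    rw [if_pos hm, if_neg hn, big_eq N n hN (by omega)]
    unfold polyInner
    have hab : (n - N) + N ≠ n - N := by omega
    rw [support_C_mul_X_pow m hc, support_binomial hab hhalf hneg,
      Finset.sum_singleton, Finset.sum_pair hab]
    rw [coeff_bl _ _ hab, coeff_br _ _ hab]
    simp only [coeff_C_mul, coeff_X_pow_self, mul_one]
    rw [hdb, hdb, hch, hchn, Nat.add_mod_right,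
      Nat.div_eq_of_lt (show min m ((n - N) + N) < N from by omega),
      Nat.div_eq_of_lt (show min m (n - N) < N from by omega),
      if_neg (show ¬ m = n from by omega)]
    by_cases hq : m % N = (n - N) % N
    · rw [if_pos hq]
      push_cast
      ring
    · rw [if_neg hq]
      ring
  · -- m big, n small
    rw [if_neg hm, if_pos hn, big_eq N m hN (by omega)]
    unfold polyInner
    have hab : (m - N) + N ≠ m - N := by omega
    rw [support_C_mul_X_pow n hc, support_binomial hab hhalf hneg,
      Finset.sum_pair hab, Finset.sum_singleton, Finset.sum_singleton]
    rw [coeff_bl _ _ hab, coeff_br _ _ hab]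
    simp only [coeff_C_mul, coeff_X_pow_self, mul_one]
    rw [hdb, hdb, hcn, Nat.add_mod_right,
      Nat.div_eq_of_lt (show min ((m - N) + N) n < N from by omega),
      Nat.div_eq_of_lt (show min (m - N) n < N from by omega),
      if_neg (show ¬ m = n from by omega)]
    by_cases hq : (m - N) % N = n % N
    · rw [if_pos hq]
      push_cast
      ring
    · rw [if_neg hq]
      ring
  · -- both big
    rw [if_neg hm, if_neg hn, big_eq N m hN (by omega), big_eq N n hN (by omega)]
    unfold polyInner
    have ham : (m - N) + N ≠ m - N := by omega
    have han : (n - N) + N ≠ n - N := by omega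
    rw [support_binomial ham hhalf hneg, support_binomial han hhalf hneg,
      Finset.sum_pair ham]
    simp only [Finset.sum_pair han]
    rw [coeff_bl _ _ ham, coeff_br _ _ ham, coeff_bl _ _ han, coeff_br _ _ han]
    set a := m - N with haa
    set b := n - N with hbb
    simp only [hdb, hch, hchn, Nat.add_mod_right]
    by_cases hab : a % N = b % N
    · simp only [if_pos hab]
      rcases lt_trichotomy a b with h | h | h
      · have hdvd : N ∣ b - a := (Nat.modEq_iff_dvd' h.le).mp hab
        have hle : N ≤ b - a := Nat.le_of_dvd (by omega) hdvd
        rw [show min (a + N) (b + N) = a + N from by omega,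
          show min (a + N) b = a + N from by omega,
          show min a (b + N) = a from by omega,
          show min a b = a from by omega,
          Nat.add_div_right a hN0,
          if_neg (show ¬ m = n from by omega)]
        push_cast
        ring
      · rw [show min (a + N) (b + N) = a + N from by omega,
          show min (a + N) b = a from by omega,
          show min a (b + N) = a from by omega,
          show min a b = a from by omega,
          Nat.add_div_right a hN0,
          if_pos (show m = n from by omega)]
        push_cast
        ring
      · have hdvd : N ∣ a - b := (Nat.modEq_iff_dvd' h.le).mp hab.symm
        have hle : N ≤ a - b := Nat.le_of_dvd (by omega) hdvd
        rw [show min (a + N) (b + N) = b + N from by omega,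
          show min (a + N) b = b from by omega,
          show min a (b + N) = b + N from by omega,
          show min a b = b from by omega,
          Nat.add_div_right b hN0,
          if_neg (show ¬ m = n from by omega)]
        push_cast
        ring
    · simp only [if_neg hab]
      rw [if_neg (show ¬ m = n from fun h => hab (by rw [haa, hbb, h]))]
      ring
end

section
/- Let A, B ∈ ℂ with B ≠ 0, φ_0 = A+B, φ_n = B for n ≥ 1, and let n ≥ 2. Suppose p(z) = Σ_{k=0}^{n} c_k z^k satisfies ⟨p, z^k⟩_b = 0 for k = 0, …, n−1 in the induced inner product. Set T_0 = 1 + |A|² + A·conj(B) and T_1 = −conj(T_0) − |B|². Then the coefficients satisfy the three-term recurrence conj(T_0)·c_{k+1} + (T_1 − T_0)·c_k + T_0·c_{k−1} = 0 for k = 1, …, n−2. -/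
/-!
For `φ = (a, b, b, …)` the Gram entry `⟨z^j, z^k⟩_b` is, off the diagonal, an affine function
of `min j k` with slope `|b|²`, so its second difference in `k` vanishes unless
`j ∈ {k, k+1, k+2}`.
Combining the orthogonality relations against `z^m, z^(m+1), z^(m+2)` with weights `1, -2, 1`
therefore leaves only the three coefficients `c_m, c_(m+1), c_(m+2)` of `p`: this is the
three-term recurrence.
-/

open Finset Polynomial Complex

open scoped ComplexConjugate

lemma polyInner_X_pow_right (φ : ℕ → ℂ) {p : ℂ[X]} {s : Finset ℕ} (hs : p.support ⊆ s)
    (k : ℕ) :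
    polyInner φ p (X ^ k) = ∑ j ∈ s, p.coeff j * dbInner φ j k := by
  simp only [polyInner, support_X_pow, sum_singleton, coeff_X_pow_self, map_one, mul_one]
  exact sum_subset hs fun j _ hj => by rw [notMem_support_iff.mp hj, zero_mul]

lemma coeff_sum_C_mul_X_pow (s : Finset ℕ) (c : ℕ → ℂ) (i : ℕ) :
    (∑ j ∈ s, C (c j) * X ^ j).coeff i = if i ∈ s then c i else 0 := by
  simp [finsetSum_coeff]

-- `stepCoeffs (A + B) B` are the Taylor coefficients of `A + B / (1 - z)`.
def stepCoeffs (a b : ℂ) (m : ℕ) : ℂ := if m = 0 then a else b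

lemma dbInner_stepCoeffs (a b : ℂ) (j k : ℕ) :
    dbInner (stepCoeffs a b) j k =
      if j = k then 1 + conj a * a + j * (conj b * b)
      else if j < k then conj a * b + j * (conj b * b)
      else a * conj b + k * (b * conj b) := by
  rcases lt_trichotomy j k with h | rfl | h
  · simp only [dbInner, stepCoeffs, h, h.ne, h.le, not_le.mpr h, ↓reduceIte, sum_range_succ',
      Nat.add_eq_zero_iff, Nat.sub_eq_zero_iff_le, one_ne_zero, false_and, and_false, sum_const,
      card_range, nsmul_eq_mul, zero_add]
    ring
  · simp only [dbInner, stepCoeffs, le_refl, ↓reduceIte, tsub_self, zero_add, mul_ite,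
      sum_range_succ', Nat.add_eq_zero_iff, one_ne_zero, and_false, sum_const, card_range,
      nsmul_eq_mul]
    ring
  · simp only [dbInner, stepCoeffs, h.ne', not_le.mpr h, lt_asymm h, ↓reduceIte, ite_mul,
      sum_range_succ', Nat.add_eq_zero_iff, Nat.sub_eq_zero_iff_le, one_ne_zero, false_and,
      and_false, sum_const, card_range, nsmul_eq_mul, zero_add]
    ring

lemma dbInner_stepCoeffs_second_diff (a b : ℂ) (j m : ℕ) :
    dbInner (stepCoeffs a b) j m - 2 * dbInner (stepCoeffs a b) j (m + 1)
        + dbInner (stepCoeffs a b) j (m + 2) =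
      (if j = m then 1 + conj a * a - conj a * b else 0)
      + (if j = m + 1 then -(2 + 2 * (conj a * a) - conj a * b - a * conj b) - conj b * b else 0)
      + (if j = m + 2 then 1 + conj a * a - a * conj b else 0) := by
  simp only [dbInner_stepCoeffs]
  split_ifs <;> first | omega | (subst_vars; push_cast; ring)

theorem coeff_recurrence_of_polyInner_stepCoeffs_eq_zero (a b : ℂ) (p : ℂ[X]) (m : ℕ)
    (h : ∀ i ≤ 2, polyInner (stepCoeffs a b) p (X ^ (m + i)) = 0) :
    (1 + conj a * a - a * conj b) * p.coeff (m + 2)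
      + (-(2 + 2 * (conj a * a) - conj a * b - a * conj b) - conj b * b) * p.coeff (m + 1)
      + (1 + conj a * a - conj a * b) * p.coeff m = 0 := by
  set s := p.support ∪ {m, m + 1, m + 2}
  have hs : p.support ⊆ s := subset_union_left
  have h₀ : polyInner (stepCoeffs a b) p (X ^ m) = 0 := h 0 (by norm_num)
  have h₁ := h 1 (by norm_num)
  have h₂ := h 2 (by norm_num)
  rw [polyInner_X_pow_right _ hs] at h₀ h₁ h₂
  have hdiff : ∑ j ∈ s, p.coeff j * (dbInner (stepCoeffs a b) j m
      - 2 * dbInner (stepCoeffs a b) j (m + 1) + dbInner (stepCoeffs a b) j (m + 2)) = 0 := by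
    simp only [mul_add, mul_sub, sum_add_distrib, sum_sub_distrib, mul_left_comm _ (2 : ℂ),
      ← mul_sum, h₀, h₁, h₂]
    ring
  simp only [dbInner_stepCoeffs_second_diff, mul_add, mul_ite, mul_zero, sum_add_distrib,
    sum_ite_eq', s, mem_union, mem_insert, mem_singleton, or_true, true_or, if_true] at hdiff
  linear_combination hdiff

theorem stmt12_general (A B : ℂ) (n : ℕ) (c : ℕ → ℂ)
    (horth : ∀ k : ℕ, k < n →
      polyInner (fun m => if m = 0 then A + B else B)
        (∑ j ∈ Finset.range (n + 1), Polynomial.C (c j) * X ^ j) (X ^ k) = 0) :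
    ∀ k : ℕ, 1 ≤ k → k ≤ n - 2 →
      (starRingEnd ℂ) (1 + (‖A‖ : ℂ) ^ 2 + A * (starRingEnd ℂ) B) * c (k + 1)
        + ((-(starRingEnd ℂ) (1 + (‖A‖ : ℂ) ^ 2 + A * (starRingEnd ℂ) B)
              - (‖B‖ : ℂ) ^ 2)
            - (1 + (‖A‖ : ℂ) ^ 2 + A * (starRingEnd ℂ) B)) * c k
        + (1 + (‖A‖ : ℂ) ^ 2 + A * (starRingEnd ℂ) B) * c (k - 1) = 0 := by
  intro k hk₁ hk₂
  obtain ⟨m, rfl⟩ : ∃ m, k = m + 1 := ⟨k - 1, by omega⟩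
  have hrec := coeff_recurrence_of_polyInner_stepCoeffs_eq_zero (A + B) B _ m
    fun i hi => horth (m + i) (by omega)
  simp only [coeff_sum_C_mul_X_pow, mem_range, show m < n + 1 by omega,
    show m + 1 < n + 1 by omega, show m + 2 < n + 1 by omega, if_true] at hrec
  simp only [← conj_mul', map_add, map_mul, map_one, conj_conj, Nat.add_sub_cancel] at hrec ⊢
  linear_combination hrec

/-- Three-term recurrence for the coefficients of the degree-n orthogonal polynomial when
φ_0 = A+B, φ_n = B (n ≥ 1), B ≠ 0, n ≥ 2: with T_0 = 1+|A|²+A·conj(B) and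
T_1 = -conj(T_0)-|B|², if ⟨p, z^k⟩_b = 0 for k = 0,…,n-1 then
conj(T_0)c_{k+1} + (T_1-T_0)c_k + T_0c_{k-1} = 0 for k = 1,…,n-2. -/
theorem stmt12 (A B : ℂ) (hB : B ≠ 0) (n : ℕ) (hn : 2 ≤ n) (c : ℕ → ℂ)
    (horth : ∀ k : ℕ, k < n →
      polyInner (fun m => if m = 0 then A + B else B)
        (∑ j ∈ Finset.range (n + 1), Polynomial.C (c j) * X ^ j) (X ^ k) = 0) :
    ∀ k : ℕ, 1 ≤ k → k ≤ n - 2 →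
      (starRingEnd ℂ) (1 + (‖A‖ : ℂ) ^ 2 + A * (starRingEnd ℂ) B) * c (k + 1)
        + ((-(starRingEnd ℂ) (1 + (‖A‖ : ℂ) ^ 2 + A * (starRingEnd ℂ) B)
              - (‖B‖ : ℂ) ^ 2)
            - (1 + (‖A‖ : ℂ) ^ 2 + A * (starRingEnd ℂ) B)) * c k
        + (1 + (‖A‖ : ℂ) ^ 2 + A * (starRingEnd ℂ) B) * c (k - 1) = 0 :=
  stmt12_general A B n c horth
end

section
/- Let r_0, r_1, r_2 ∈ ℝ and define φ_k = r_0·δ_{k,0} + r_1 + r_2·(k+1) for k ≥ 0 (i.e. φ_0 = r_0 + r_1 + r_2 and φ_k = r_1 + r_2(k+1) for k ≥ 1). Let M_{j,k} = ⟨z^j, z^k⟩_b be the induced Gram matrix, and define iterated differences M_{j,k,0} = M_{j,k}, M_{j,k,d+1} = M_{j,k,d} − M_{j,k+1,d}. Then: (i) for j < k, M_{j,k,2} = 0; and (ii) for k + 5 ≤ j, M_{j,k,3} = r_2² and hence M_{j,k,4} = 0. -/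
open Finset

/-- The Taylor coefficients of φ = r₀ + r₁/(1-z) + r₂/(1-z)². -/
noncomputable def phiR (r₀ r₁ r₂ : ℝ) (k : ℕ) : ℝ :=
  if k = 0 then r₀ + r₁ + r₂ else r₁ + r₂ * (k + 1)

/-- The Gram matrix M_{j,k} = δ_{j,k} + ∑_{s=0}^{min(j,k)} φ_s φ_{|j-k|+s}. -/
noncomputable def gramR (r₀ r₁ r₂ : ℝ) (j k : ℕ) : ℝ :=
  (if j = k then 1 else 0) +
    ∑ s ∈ Finset.range (min j k + 1),
      phiR r₀ r₁ r₂ s * phiR r₀ r₁ r₂ (max j k - min j k + s)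

/-- Iterated differences along the column index: D 0 = M, D (d+1) j k = D d j k - D d j (k+1). -/
noncomputable def gramDiff (r₀ r₁ r₂ : ℝ) : ℕ → ℕ → ℕ → ℝ
  | 0, j, k => gramR r₀ r₁ r₂ j k
  | d + 1, j, k => gramDiff r₀ r₁ r₂ d j k - gramDiff r₀ r₁ r₂ d j (k + 1)

/-- Closed form for the off-diagonal Gram sums. -/
noncomputable def cF (r₀ r₁ r₂ n m : ℝ) : ℝ :=
  r₀ * (r₁ + r₂ * (m + 1)) + (n + 1) * r₁ ^ 2
    + r₁ * r₂ * (m * (n + 1) + (n + 1) * (n + 2))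
    + r₂ ^ 2 * ((n + 1) * (n + 2) * (2 * n + 3) / 6 + m * (n + 1) * (n + 2) / 2)

lemma phiR_pos (r₀ r₁ r₂ : ℝ) (k : ℕ) (hk : k ≠ 0) :
    phiR r₀ r₁ r₂ k = r₁ + r₂ * ((k : ℝ) + 1) := by
  simp [phiR, hk]

lemma sumF (r₀ r₁ r₂ : ℝ) (n m : ℕ) (hm : 1 ≤ m) :
    ∑ s ∈ Finset.range (n + 1), phiR r₀ r₁ r₂ s * phiR r₀ r₁ r₂ (m + s)
      = cF r₀ r₁ r₂ (n : ℝ) (m : ℝ) := by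
  induction n with
  | zero =>
      rw [Finset.sum_range_one, Nat.add_zero, phiR_pos r₀ r₁ r₂ m (by omega)]
      simp only [phiR, if_pos rfl, cF]
      push_cast
      ring
  | succ n ih =>
      rw [Finset.sum_range_succ, ih, phiR_pos r₀ r₁ r₂ (n + 1) (by omega),
        phiR_pos r₀ r₁ r₂ (m + (n + 1)) (by omega)]
      simp only [cF]
      push_cast
      ring

lemma gram_lt (r₀ r₁ r₂ : ℝ) (j k : ℕ) (h : j < k) :
    gramR r₀ r₁ r₂ j k = cF r₀ r₁ r₂ (j : ℝ) ((k : ℝ) - (j : ℝ)) := by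
  have hne : j ≠ k := Nat.ne_of_lt h
  rw [gramR, if_neg hne, min_eq_left h.le, max_eq_right h.le,
    sumF r₀ r₁ r₂ j (k - j) (by omega), Nat.cast_sub h.le]
  ring

lemma gram_gt (r₀ r₁ r₂ : ℝ) (j k : ℕ) (h : k < j) :
    gramR r₀ r₁ r₂ j k = cF r₀ r₁ r₂ (k : ℝ) ((j : ℝ) - (k : ℝ)) := by
  have hne : j ≠ k := (Nat.ne_of_lt h).symm
  rw [gramR, if_neg hne, min_eq_right h.le, max_eq_left h.le,
    sumF r₀ r₁ r₂ k (j - k) (by omega), Nat.cast_sub h.le]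
  ring

lemma D3_eq (r₀ r₁ r₂ : ℝ) (j k : ℕ) (h : k + 4 ≤ j) :
    gramDiff r₀ r₁ r₂ 3 j k = r₂ ^ 2 := by
  show gramR r₀ r₁ r₂ j k - gramR r₀ r₁ r₂ j (k + 1)
      - (gramR r₀ r₁ r₂ j (k + 1) - gramR r₀ r₁ r₂ j (k + 2))
      - (gramR r₀ r₁ r₂ j (k + 1) - gramR r₀ r₁ r₂ j (k + 2)
        - (gramR r₀ r₁ r₂ j (k + 2) - gramR r₀ r₁ r₂ j (k + 3))) = r₂ ^ 2
  rw [gram_gt r₀ r₁ r₂ j k (by omega), gram_gt r₀ r₁ r₂ j (k + 1) (by omega),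
    gram_gt r₀ r₁ r₂ j (k + 2) (by omega), gram_gt r₀ r₁ r₂ j (k + 3) (by omega)]
  simp only [cF]
  push_cast
  ring

/-- (i) For j < k, the second difference vanishes; (ii) for k + 5 ≤ j, the third difference
equals r₂² and hence the fourth difference vanishes. -/
theorem stmt17 (r₀ r₁ r₂ : ℝ) :
    (∀ j k : ℕ, j < k → gramDiff r₀ r₁ r₂ 2 j k = 0) ∧
    (∀ j k : ℕ, k + 5 ≤ j →
      gramDiff r₀ r₁ r₂ 3 j k = r₂ ^ 2 ∧ gramDiff r₀ r₁ r₂ 4 j k = 0) := by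
  constructor
  · intro j k h
    show gramR r₀ r₁ r₂ j k - gramR r₀ r₁ r₂ j (k + 1)
        - (gramR r₀ r₁ r₂ j (k + 1) - gramR r₀ r₁ r₂ j (k + 2)) = 0
    rw [gram_lt r₀ r₁ r₂ j k h, gram_lt r₀ r₁ r₂ j (k + 1) (by omega),
      gram_lt r₀ r₁ r₂ j (k + 2) (by omega)]
    simp only [cF]
    push_cast
    ring
  · intro j k h
    refine ⟨D3_eq r₀ r₁ r₂ j k (by omega), ?_⟩
    show gramDiff r₀ r₁ r₂ 3 j k - gramDiff r₀ r₁ r₂ 3 j (k + 1) = 0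
    rw [D3_eq r₀ r₁ r₂ j k (by omega), D3_eq r₀ r₁ r₂ j (k + 1) (by omega)]
    ring
end
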